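/- Fix an impulse time sequence and consider the homogeneous impulsive system ẋ(t) = Ã(t)x(t) on the flow intervals with jumps x(t_k⁺) = J̃(k)x(t_k), where Ã is continuous, bounded and Metzler-valued and J̃(k) ≥ 0 for all k ≥ 1. Let b, d ∈ ℝ^n with b > 0 and d > 0, and suppose χ : [t_0,∞) → ℝ^n is piecewise-C¹ along the impulse sequence and satisfies χ̄₁ ≤ χ(t) ≤ χ̄₂ for all t ≥ t_0 for some vectors 0 < χ̄₁ ≤ χ̄₂, together with χ̇(t)ᵀ + χ(t)ᵀÃ(t) + bᵀ < 0 at every t in the interiors of the flow intervals and χ(t_k⁺)ᵀJ̃(k) − χ(t_k)ᵀ + dᵀ < 0 for all k ≥ 1. Set α = (min_i b_i)/(max_i (χ̄₂)_i) and ρ = 1 − (min_i d_i)/(max_i (χ̄₂)_i). Then ρ ∈ (0,1) and every trajectory x of the homogeneous system with x(t_0) ≥ 0 satisfies ‖x(t)‖_1 ≤ (max_i (χ̄₂)_i / min_i (χ̄₁)_i) · ρ^{κ(t,t_0)} · e^{−α(t−t_0)} · ‖x(t_0)‖_1 for all t ≥ t_0; consequently there exists M > 0 such that every trajectory of the homogeneous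 system satisfies ‖x(t)‖_1 ≤ M ρ^{κ(t,t_0)} e^{−α(t−t_0)} ‖x(t_0)‖_1 for all t ≥ t_0. -/

import Mathlib

open Matrix Filter Set Topology

/-- A square real matrix is Metzler if all its off-diagonal entries are nonnegative. -/
def Metzler {n : ℕ} (A : Matrix (Fin n) (Fin n) ℝ) : Prop :=
  ∀ i j, i ≠ j → 0 ≤ A i j

/-- An impulse time sequence: `t 0` is the initial time `t₀`, the `t k` for `k ≥ 1` are the
impulse times; the sequence is strictly increasing and tends to infinity. -/
structure ImpulseSeq where
  t : ℕ → ℝ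
  t0_nonneg : 0 ≤ t 0
  mono : StrictMono t
  tendsto_atTop : Filter.Tendsto t Filter.atTop Filter.atTop

/-- `κ(t,s)`: the number of impulse instants `t_k`, `k ≥ 1`, with `s ≤ t_k < t`. -/
noncomputable def ImpulseSeq.kappa (σ : ImpulseSeq) (s u : ℝ) : ℕ :=
  Set.ncard {k : ℕ | 1 ≤ k ∧ s ≤ σ.t k ∧ σ.t k < u}

/-- A trajectory of the homogeneous impulsive system `ẋ = Ã(t)x`, `x(t_k⁺) = J̃(k)x(t_k)`. -/
def IsHomTrajectory {n : ℕ} (σ : ImpulseSeq)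
    (At : ℝ → Matrix (Fin n) (Fin n) ℝ) (J : ℕ → Matrix (Fin n) (Fin n) ℝ)
    (x : ℝ → Fin n → ℝ) : Prop :=
  (∀ k, ContinuousOn x (Set.Ioc (σ.t k) (σ.t (k + 1)))) ∧
  (∀ k, ∀ s ∈ Set.Ioo (σ.t k) (σ.t (k + 1)), HasDerivAt x (At s *ᵥ x s) s) ∧
  ContinuousWithinAt x (Set.Ici (σ.t 0)) (σ.t 0) ∧
  (∀ k, 1 ≤ k →
    Filter.Tendsto x (nhdsWithin (σ.t k) (Set.Ioi (σ.t k))) (nhds (J k *ᵥ x (σ.t k))))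

/-- A function `f` is piecewise-C¹ along the impulse sequence, with derivative `f'` on the
interiors of the flow intervals and right limits `fplus k = f(t_k⁺)` at the impulse times. -/
def PiecewiseC1 {n : ℕ} (σ : ImpulseSeq)
    (f f' : ℝ → Fin n → ℝ) (fplus : ℕ → Fin n → ℝ) : Prop :=
  (∀ k, ContinuousOn f (Set.Ioc (σ.t k) (σ.t (k + 1)))) ∧
  (∀ k, ∀ s ∈ Set.Ioo (σ.t k) (σ.t (k + 1)), HasDerivAt f (f' s) s) ∧
  (∀ k, ContinuousOn f' (Set.Ioo (σ.t k) (σ.t (k + 1)))) ∧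
  ContinuousWithinAt f (Set.Ici (σ.t 0)) (σ.t 0) ∧
  (∀ k, 1 ≤ k →
    Filter.Tendsto f (nhdsWithin (σ.t k) (Set.Ioi (σ.t k))) (nhds (fplus k)))

/-- The 1-norm `‖v‖₁ = Σᵢ |vᵢ|` of a vector. -/
def norm1 {n : ℕ} (v : Fin n → ℝ) : ℝ := ∑ i, |v i|

/-!
The Lyapunov function `V t = χ t ⬝ᵥ |x t|` works for trajectories of either sign. Since `Ã t` is
Metzler, each `|xᵢ|` has a right derivative at most `(Ã t *ᵥ |x|)ᵢ`, so the flow condition gives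
`D⁺V ≤ -α V` and Grönwall's inequality gives decay `exp (-α (u - a))` on every flow interval.
Since `J̃ k ≥ 0`, `|J̃ k *ᵥ x| ≤ J̃ k *ᵥ |x|`, so the jump condition gives `V (t_k⁺) ≤ ρ V (t_k)`.
The margins `b`, `d` turn into the rates through `(min b / max χ̄₂) χ ≤ b` and
`(min d / max χ̄₂) χ ≤ d`, and `min χ̄₁ ‖x‖₁ ≤ V ≤ max χ̄₂ ‖x‖₁` converts the decay of `V` into
the decay of `‖x‖₁`.
-/

open Real

theorem HasDerivAt.hasDerivWithinAt_Ici_abs_of_eq_zero {f : ℝ → ℝ} {f' t : ℝ}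
    (hf : HasDerivAt f f' t) (h0 : f t = 0) :
    HasDerivWithinAt (fun u => |f u|) |f'| (Ici t) t := by
  rw [hasDerivWithinAt_iff_isLittleO]
  refine (Asymptotics.IsBigO.of_bound 1 ?_).trans_isLittleO
    ((hasDerivAt_iff_isLittleO.mp hf).mono nhdsWithin_le_nhds)
  filter_upwards [self_mem_nhdsWithin] with u (hu : t ≤ u)
  simp only [h0, abs_zero, sub_zero, smul_eq_mul, Real.norm_eq_abs, one_mul]
  calc |(|f u| - (u - t) * |f'|)| = |(|f u| - |(u - t) * f'|)| := by
        rw [abs_mul, abs_of_nonneg (sub_nonneg.mpr hu)]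
    _ ≤ |f u - (u - t) * f'| := abs_abs_sub_abs_le_abs_sub _ _

theorem HasDerivAt.exists_hasDerivWithinAt_Ici_abs {f : ℝ → ℝ} {f' t : ℝ}
    (hf : HasDerivAt f f' t) :
    ∃ ε : ℝ, |ε| ≤ 1 ∧ ε * f t = |f t| ∧
      HasDerivWithinAt (fun u => |f u|) (ε * f') (Ici t) t := by
  by_cases h0 : f t = 0
  · refine ⟨SignType.sign f', ?_, by simp [h0], ?_⟩
    · rcases lt_trichotomy f' 0 with h | h | h <;> simp [h]
    · simpa using hf.hasDerivWithinAt_Ici_abs_of_eq_zero h0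
  · refine ⟨SignType.sign (f t), ?_, sign_mul_self _, ?_⟩
    · rcases lt_trichotomy (f t) 0 with h | h | h <;> simp [h]
    · exact ((hasDerivAt_abs h0).comp t hf).hasDerivWithinAt

theorem le_mul_exp_of_hasDerivWithinAt_Ici_le {V : ℝ → ℝ} {α a b : ℝ} (hab : a ≤ b)
    (hV : ContinuousOn V (Icc a b))
    (hV' : ∀ t ∈ Ico a b, ∃ D, HasDerivWithinAt V D (Ici t) t ∧ D ≤ -α * V t) :
    V b ≤ V a * exp (-(α * (b - a))) := by
  choose! V' hV' hle using hV'
  have := le_gronwallBound_of_liminf_deriv_right_le hV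
    (fun t ht _ hr => (hV' t ht).liminf_right_slope_le hr) le_rfl
    (fun t ht => (hle t ht).trans_eq (add_zero _).symm) b (right_mem_Icc.2 hab)
  rwa [gronwallBound_ε0, neg_mul] at this

theorem le_mul_exp_of_tendsto_of_decay {V : ℝ → ℝ} {α a u L : ℝ} (hau : a < u)
    (hL : Tendsto V (𝓝[>] a) (𝓝 L))
    (hdecay : ∀ s ∈ Ioc a u, V u ≤ V s * exp (-(α * (u - s)))) :
    V u ≤ L * exp (-(α * (u - a))) := by
  have hexp : Tendsto (fun s => exp (-(α * (u - s)))) (𝓝[>] a) (𝓝 (exp (-(α * (u - a))))) :=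
    (by fun_prop : Continuous fun s => exp (-(α * (u - s)))).continuousWithinAt
  refine ge_of_tendsto (hL.mul hexp) ?_
  filter_upwards [Ioo_mem_nhdsGT hau] with s hs using hdecay s (Ioo_subset_Ioc_self hs)

theorem HasDerivWithinAt.dotProduct {ι : Type*} [Fintype ι] {f g : ℝ → ι → ℝ} {f' g' : ι → ℝ}
    {s : Set ℝ} {t : ℝ} (hf : HasDerivWithinAt f f' s t) (hg : HasDerivWithinAt g g' s t) :
    HasDerivWithinAt (fun u => f u ⬝ᵥ g u) (f' ⬝ᵥ g t + f t ⬝ᵥ g') s t := by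
  simp only [_root_.dotProduct, ← Finset.sum_add_distrib]
  exact HasDerivWithinAt.fun_sum fun i _ =>
    (hasDerivWithinAt_pi.1 hf i).fun_mul (hasDerivWithinAt_pi.1 hg i)

theorem Filter.Tendsto.dotProduct_abs {α ι : Type*} [Fintype ι] {l : Filter α}
    {f g : α → ι → ℝ} {a b : ι → ℝ} (hf : Tendsto f l (𝓝 a)) (hg : Tendsto g l (𝓝 b)) :
    Tendsto (fun u => f u ⬝ᵥ |g u|) l (𝓝 (a ⬝ᵥ |b|)) :=
  tendsto_finsetSum _ fun i _ => (tendsto_pi_nhds.1 hf i).mul (tendsto_pi_nhds.1 hg i).abs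

theorem ContinuousOn.dotProduct_abs {ι : Type*} [Fintype ι] {s : Set ℝ} {f g : ℝ → ι → ℝ}
    (hf : ContinuousOn f s) (hg : ContinuousOn g s) : ContinuousOn (fun u => f u ⬝ᵥ |g u|) s :=
  fun u hu => (hf u hu).dotProduct_abs (hg u hu)

theorem Finite.lt_ciInf_of_forall_lt {ι α : Type*} [Finite ι] [Nonempty ι]
    [ConditionallyCompleteLinearOrder α] {f : ι → α} {a : α} (h : ∀ i, a < f i) :
    a < ⨅ i, f i :=
  let ⟨i, hi⟩ := exists_eq_ciInf_of_finite (f := f)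
  hi ▸ h i

theorem le_neg_smul_of_add_neg {ι : Type*} [Finite ι] {v b χ : ι → ℝ} {c : ℝ}
    (hb : ∀ i, 0 ≤ b i) (hc : 0 < c) (hχ : ∀ i, χ i ≤ c) (h : ∀ i, (v + b) i < 0) :
    v ≤ -((⨅ i, b i) / c) • χ := fun i => by
  have hscale : (⨅ i, b i) / c * χ i ≤ ⨅ i, b i :=
    (mul_le_mul_of_nonneg_left (hχ i) (div_nonneg (Real.iInf_nonneg hb) hc.le)).trans_eq
      (div_mul_cancel₀ _ hc.ne')
  have hinf : ⨅ i, b i ≤ b i := ciInf_le (Finite.bddBelow_range b) i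
  have hi := h i
  simp only [Pi.add_apply] at hi
  simp only [Pi.smul_apply, smul_eq_mul, neg_mul]
  linarith

theorem le_one_sub_smul_of_sub_add_neg {ι : Type*} [Finite ι] {w χ d : ι → ℝ} {c : ℝ}
    (hd : ∀ i, 0 ≤ d i) (hc : 0 < c) (hχ : ∀ i, χ i ≤ c) (h : ∀ i, (w - χ + d) i < 0) :
    w ≤ (1 - (⨅ i, d i) / c) • χ := by
  rw [sub_smul, one_smul, sub_eq_add_neg, ← neg_smul]
  exact sub_le_iff_le_add'.1 (le_neg_smul_of_add_neg hd hc hχ h)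

theorem one_sub_ciInf_div_mem_Ioo {ι : Type*} [Finite ι] [Nonempty ι] {d : ι → ℝ} {c : ℝ}
    (hd : ∀ i, 0 < d i) {j : ι} (hj : d j < c) : 1 - (⨅ i, d i) / c ∈ Ioo 0 1 := by
  have hc : 0 < c := (hd j).trans hj
  exact ⟨sub_pos.2 ((div_lt_one hc).2 ((ciInf_le (Finite.bddBelow_range d) j).trans_lt hj)),
    sub_lt_self _ (div_pos (Finite.lt_ciInf_of_forall_lt hd) hc)⟩

theorem Metzler.mul_mulVec_le {n : ℕ} {A : Matrix (Fin n) (Fin n) ℝ} (hA : Metzler A)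
    {x : Fin n → ℝ} {ε : ℝ} {i : Fin n} (hε : |ε| ≤ 1) (hεx : ε * x i = |x i|) :
    ε * (A *ᵥ x) i ≤ (A *ᵥ |x|) i := by
  simp only [mulVec, dotProduct, Finset.mul_sum]
  refine Finset.sum_le_sum fun j _ => ?_
  rw [mul_left_comm]
  rcases eq_or_ne i j with rfl | hij
  · rw [hεx]; rfl
  · refine mul_le_mul_of_nonneg_left ?_ (hA i j hij)
    calc ε * x j ≤ |ε| * |x j| := abs_mul ε (x j) ▸ le_abs_self _
      _ ≤ |x j| := mul_le_of_le_one_left (abs_nonneg _) hε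

theorem abs_mulVec_le_mulVec_abs {m n : Type*} [Fintype n] {J : Matrix m n ℝ}
    (hJ : ∀ i j, 0 ≤ J i j) (y : n → ℝ) : |J *ᵥ y| ≤ J *ᵥ |y| := fun i =>
  (Finset.abs_sum_le_sum_abs _ _).trans_eq <|
    Finset.sum_congr rfl fun j _ => by rw [abs_mul, abs_of_nonneg (hJ i j)]; rfl

theorem dotProduct_abs_mulVec_le {m n : Type*} [Fintype m] [Fintype n] {J : Matrix m n ℝ}
    {p : m → ℝ} {w : n → ℝ} {ρ : ℝ} (hJ : ∀ i j, 0 ≤ J i j) (hp : 0 ≤ p) (hpJ : p ᵥ* J ≤ ρ • w)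
    (y : n → ℝ) : p ⬝ᵥ |J *ᵥ y| ≤ ρ * (w ⬝ᵥ |y|) :=
  calc p ⬝ᵥ |J *ᵥ y| ≤ p ⬝ᵥ (J *ᵥ |y|) :=
        dotProduct_le_dotProduct_of_nonneg_left (abs_mulVec_le_mulVec_abs hJ y) hp
    _ = (p ᵥ* J) ⬝ᵥ |y| := dotProduct_mulVec _ _ _
    _ ≤ (ρ • w) ⬝ᵥ |y| := dotProduct_le_dotProduct_of_nonneg_right hpJ (abs_nonneg _)
    _ = ρ * (w ⬝ᵥ |y|) := by rw [smul_dotProduct, smul_eq_mul]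

namespace ImpulseSeq

variable (σ : ImpulseSeq)

theorem t_zero_le (k : ℕ) : σ.t 0 ≤ σ.t k := σ.mono.monotone k.zero_le

theorem kappa_self (s : ℝ) : σ.kappa s s = 0 := by
  have hempty : {k : ℕ | 1 ≤ k ∧ s ≤ σ.t k ∧ σ.t k < s} = ∅ :=
    Set.eq_empty_of_forall_notMem fun k hk => (hk.2.1.trans_lt hk.2.2).false
  rw [kappa, hempty, Set.ncard_empty]

theorem kappa_eq_of_mem_Ioc {k : ℕ} {u : ℝ} (hu : u ∈ Ioc (σ.t k) (σ.t (k + 1))) :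
    σ.kappa (σ.t 0) u = k := by
  have hset : {j : ℕ | 1 ≤ j ∧ σ.t 0 ≤ σ.t j ∧ σ.t j < u} = ↑(Finset.Icc 1 k) := by
    ext j
    simp only [Set.mem_ofPred_eq, Finset.coe_Icc, Set.mem_Icc]
    refine ⟨fun ⟨hj1, _, hju⟩ => ⟨hj1, ?_⟩, fun ⟨hj1, hjk⟩ => ⟨hj1, ?_, ?_⟩⟩
    · exact Nat.lt_succ_iff.1 (σ.mono.lt_iff_lt.1 (hju.trans_le hu.2))
    · exact σ.t_zero_le j
    · exact (σ.mono.monotone hjk).trans_lt hu.1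
  rw [kappa, hset, Set.ncard_coe_finset, Nat.card_Icc, Nat.add_sub_cancel]

theorem exists_mem_Ioc {u : ℝ} (hu : σ.t 0 < u) : ∃ k, u ∈ Ioc (σ.t k) (σ.t (k + 1)) := by
  classical
  have hex : ∃ m, u ≤ σ.t m := (σ.tendsto_atTop.eventually_ge_atTop u).exists
  obtain ⟨k, hk⟩ : ∃ k, Nat.find hex = k + 1 :=
    Nat.exists_eq_succ_of_ne_zero fun h => (Nat.find_spec hex).not_gt (h ▸ hu)
  exact ⟨k, not_le.1 (Nat.find_min hex (hk ▸ k.lt_succ_self)), hk ▸ Nat.find_spec hex⟩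

theorem le_pow_kappa_mul_exp {V : ℝ → ℝ} {α ρ : ℝ} (hρ : 0 ≤ ρ)
    (hflow : ∀ k, ∀ a ∈ Ioc (σ.t k) (σ.t (k + 1)), ∀ u ∈ Icc a (σ.t (k + 1)),
      V u ≤ V a * exp (-(α * (u - a))))
    (hinit : Tendsto V (𝓝[>] (σ.t 0)) (𝓝 (V (σ.t 0))))
    (hjump : ∀ k, 1 ≤ k → ∃ L, Tendsto V (𝓝[>] (σ.t k)) (𝓝 L) ∧ L ≤ ρ * V (σ.t k))
    {u : ℝ} (hu : σ.t 0 ≤ u) :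
    V u ≤ ρ ^ σ.kappa (σ.t 0) u * (exp (-(α * (u - σ.t 0))) * V (σ.t 0)) := by
  have hdecay : ∀ k, ∀ u ∈ Ioc (σ.t k) (σ.t (k + 1)), ∀ s ∈ Ioc (σ.t k) u,
      V u ≤ V s * exp (-(α * (u - s))) := fun k u hu s hs =>
    hflow k s ⟨hs.1, hs.2.trans hu.2⟩ u ⟨hs.2, hu.2⟩
  have hmain : ∀ k, ∀ u ∈ Ioc (σ.t k) (σ.t (k + 1)),
      V u ≤ ρ ^ k * (exp (-(α * (u - σ.t 0))) * V (σ.t 0)) := by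
    intro k
    induction k with
    | zero =>
      intro u hu
      simpa [mul_comm] using le_mul_exp_of_tendsto_of_decay hu.1 hinit (hdecay 0 u hu)
    | succ k ih =>
      intro u hu
      obtain ⟨L, hL, hLle⟩ := hjump (k + 1) k.succ_pos
      have hprev := ih (σ.t (k + 1)) ⟨σ.mono k.lt_succ_self, le_rfl⟩
      calc V u ≤ L * exp (-(α * (u - σ.t (k + 1)))) :=
            le_mul_exp_of_tendsto_of_decay hu.1 hL (hdecay (k + 1) u hu)
        _ ≤ ρ * (ρ ^ k * (exp (-(α * (σ.t (k + 1) - σ.t 0))) * V (σ.t 0))) *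
            exp (-(α * (u - σ.t (k + 1)))) := by gcongr; exact hLle.trans (by gcongr)
        _ = ρ ^ (k + 1) * (exp (-(α * (u - σ.t 0))) * V (σ.t 0)) := by
            rw [show u - σ.t 0 = (u - σ.t (k + 1)) + (σ.t (k + 1) - σ.t 0) by ring, mul_add,
              neg_add, exp_add]
            ring
  rcases hu.eq_or_lt with rfl | hlt
  · simp [kappa_self]
  · obtain ⟨k, hk⟩ := σ.exists_mem_Ioc hlt
    rw [σ.kappa_eq_of_mem_Ioc hk]
    exact hmain k u hk

end ImpulseSeq

section Lyapunov

variable {n : ℕ}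

theorem mul_norm1_le_dotProduct_abs {w v : Fin n → ℝ} {c : ℝ} (h : ∀ i, c ≤ w i) :
    c * norm1 v ≤ w ⬝ᵥ |v| := by
  rw [norm1, Finset.mul_sum]
  exact Finset.sum_le_sum fun i _ => mul_le_mul_of_nonneg_right (h i) (abs_nonneg _)

theorem dotProduct_abs_le_mul_norm1 {w v : Fin n → ℝ} {c : ℝ} (h : ∀ i, w i ≤ c) :
    w ⬝ᵥ |v| ≤ c * norm1 v := by
  rw [norm1, Finset.mul_sum]
  exact Finset.sum_le_sum fun i _ => mul_le_mul_of_nonneg_right (h i) (abs_nonneg _)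

theorem norm1_le_div_mul_of_dotProduct_abs_le {χu χ₀ v w : Fin n → ℝ} {c₁ c₂ K : ℝ}
    (hc₁ : 0 < c₁) (hK : 0 ≤ K) (hχu : ∀ i, c₁ ≤ χu i) (hχ₀ : ∀ i, χ₀ i ≤ c₂)
    (h : χu ⬝ᵥ |v| ≤ K * (χ₀ ⬝ᵥ |w|)) : norm1 v ≤ c₂ / c₁ * (K * norm1 w) := by
  rw [div_mul_eq_mul_div, le_div_iff₀' hc₁]
  calc c₁ * norm1 v ≤ χu ⬝ᵥ |v| := mul_norm1_le_dotProduct_abs hχu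
    _ ≤ K * (χ₀ ⬝ᵥ |w|) := h
    _ ≤ K * (c₂ * norm1 w) := mul_le_mul_of_nonneg_left (dotProduct_abs_le_mul_norm1 hχ₀) hK
    _ = c₂ * (K * norm1 w) := mul_left_comm _ _ _

theorem exists_hasDerivWithinAt_dotProduct_abs_le {x χ : ℝ → Fin n → ℝ}
    {A : Matrix (Fin n) (Fin n) ℝ} {χ'₀ : Fin n → ℝ} {s : ℝ} (hx : HasDerivAt x (A *ᵥ x s) s)
    (hχ : HasDerivAt χ χ'₀ s) (hA : Metzler A) (hχ₀ : 0 ≤ χ s) :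
    ∃ D, HasDerivWithinAt (fun u => χ u ⬝ᵥ |x u|) D (Ici s) s ∧
      D ≤ (χ'₀ + χ s ᵥ* A) ⬝ᵥ |x s| := by
  choose ε hε hεx hderiv using fun i => (hasDerivAt_pi.1 hx i).exists_hasDerivWithinAt_Ici_abs
  refine ⟨_, hχ.hasDerivWithinAt.dotProduct (hasDerivWithinAt_pi.2 hderiv), ?_⟩
  rw [add_dotProduct, ← dotProduct_mulVec]
  exact add_le_add_right (dotProduct_le_dotProduct_of_nonneg_left
    (fun i => hA.mul_mulVec_le (hε i) (hεx i)) hχ₀) _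

theorem dotProduct_abs_le_mul_exp_of_metzler {x χ χ' : ℝ → Fin n → ℝ}
    {A : ℝ → Matrix (Fin n) (Fin n) ℝ} {α a b : ℝ} (hab : a ≤ b)
    (hxc : ContinuousOn x (Icc a b)) (hx : ∀ s ∈ Ico a b, HasDerivAt x (A s *ᵥ x s) s)
    (hχc : ContinuousOn χ (Icc a b)) (hχ : ∀ s ∈ Ico a b, HasDerivAt χ (χ' s) s)
    (hA : ∀ s ∈ Ico a b, Metzler (A s)) (hχ₀ : ∀ s ∈ Ico a b, 0 ≤ χ s)
    (hflow : ∀ s ∈ Ico a b, χ' s + χ s ᵥ* A s ≤ -α • χ s) :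
    χ b ⬝ᵥ |x b| ≤ χ a ⬝ᵥ |x a| * exp (-(α * (b - a))) := by
  refine le_mul_exp_of_hasDerivWithinAt_Ici_le hab (hχc.dotProduct_abs hxc) fun s hs => ?_
  obtain ⟨D, hD, hDle⟩ :=
    exists_hasDerivWithinAt_dotProduct_abs_le (hx s hs) (hχ s hs) (hA s hs) (hχ₀ s hs)
  refine ⟨D, hD, hDle.trans ?_⟩
  calc _ ≤ (-α • χ s) ⬝ᵥ |x s| :=
        dotProduct_le_dotProduct_of_nonneg_right (hflow s hs) (abs_nonneg _)
    _ = -α * (χ s ⬝ᵥ |x s|) := by rw [smul_dotProduct, smul_eq_mul]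

theorem PiecewiseC1.le_fplus {σ : ImpulseSeq} {f f' : ℝ → Fin n → ℝ} {fplus : ℕ → Fin n → ℝ}
    (hf : PiecewiseC1 σ f f' fplus) {w : Fin n → ℝ} (hw : ∀ s, σ.t 0 ≤ s → w ≤ f s) {k : ℕ}
    (hk : 1 ≤ k) : w ≤ fplus k :=
  ge_of_tendsto (hf.2.2.2.2 k hk) <| eventually_nhdsWithin_of_forall fun s hs =>
    hw s ((σ.t_zero_le k).trans (le_of_lt hs))

theorem IsHomTrajectory.dotProduct_abs_le {σ : ImpulseSeq} {At : ℝ → Matrix (Fin n) (Fin n) ℝ}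
    {J : ℕ → Matrix (Fin n) (Fin n) ℝ} {x χ χ' : ℝ → Fin n → ℝ} {χp : ℕ → Fin n → ℝ} {α ρ : ℝ}
    (hx : IsHomTrajectory σ At J x) (hχ : PiecewiseC1 σ χ χ' χp)
    (hAM : ∀ s, σ.t 0 ≤ s → Metzler (At s)) (hJ : ∀ k, 1 ≤ k → ∀ i j, 0 ≤ J k i j)
    (hχ₀ : ∀ s, σ.t 0 ≤ s → 0 ≤ χ s) (hρ : 0 ≤ ρ)
    (hflow : ∀ k, ∀ s ∈ Ioo (σ.t k) (σ.t (k + 1)), χ' s + χ s ᵥ* At s ≤ -α • χ s)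
    (hjump : ∀ k, 1 ≤ k → χp k ᵥ* J k ≤ ρ • χ (σ.t k)) {u : ℝ} (hu : σ.t 0 ≤ u) :
    χ u ⬝ᵥ |x u| ≤
      ρ ^ σ.kappa (σ.t 0) u * (exp (-(α * (u - σ.t 0))) * (χ (σ.t 0) ⬝ᵥ |x (σ.t 0)|)) := by
  have hχp₀ : ∀ k, 1 ≤ k → 0 ≤ χp k := fun k hk => hχ.le_fplus hχ₀ hk
  obtain ⟨hxc, hx', hx₀, hxjump⟩ := hx
  obtain ⟨hχc, hχ', -, hχc₀, hχjump⟩ := hχ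
  refine σ.le_pow_kappa_mul_exp hρ ?_
    ((hχc₀.dotProduct_abs hx₀).mono_left (nhdsWithin_mono _ Ioi_subset_Ici_self))
    (fun k hk => ⟨_, (hχjump k hk).dotProduct_abs (hxjump k hk),
      dotProduct_abs_mulVec_le (hJ k hk) (hχp₀ k hk) (hjump k hk) _⟩) hu
  intro k a ha u hu
  have hIcc : Icc a u ⊆ Ioc (σ.t k) (σ.t (k + 1)) := fun s hs =>
    ⟨ha.1.trans_le hs.1, hs.2.trans hu.2⟩
  have hIco : Ico a u ⊆ Ioo (σ.t k) (σ.t (k + 1)) := fun s hs =>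
    ⟨ha.1.trans_le hs.1, hs.2.trans_le hu.2⟩
  have ht₀ : ∀ s ∈ Ico a u, σ.t 0 ≤ s := fun s hs =>
    (σ.t_zero_le k).trans (hIco hs).1.le
  exact dotProduct_abs_le_mul_exp_of_metzler hu.1 ((hxc k).mono hIcc)
    (fun s hs => hx' k s (hIco hs)) ((hχc k).mono hIcc) (fun s hs => hχ' k s (hIco hs))
    (fun s hs => hAM s (ht₀ s hs)) (fun s hs => hχ₀ s (ht₀ s hs))
    (fun s hs => hflow k s (hIco hs))

end Lyapunov

theorem sum_separable_lyapunov_suff_general {n : ℕ} (hn : 0 < n) (σ : ImpulseSeq)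
    (At : ℝ → Matrix (Fin n) (Fin n) ℝ) (J : ℕ → Matrix (Fin n) (Fin n) ℝ)
    (hAM : ∀ t : ℝ, 0 ≤ t → Metzler (At t))
    (hJ : ∀ k : ℕ, 1 ≤ k → ∀ i j, 0 ≤ J k i j)
    (b d : Fin n → ℝ) (hb : ∀ i, 0 < b i) (hd : ∀ i, 0 < d i)
    (χ χ' : ℝ → Fin n → ℝ) (χp : ℕ → Fin n → ℝ)
    (hpc : PiecewiseC1 σ χ χ' χp)
    (χ1 χ2 : Fin n → ℝ) (hχ1 : ∀ i, 0 < χ1 i)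
    (hbound : ∀ s : ℝ, σ.t 0 ≤ s → ∀ i, χ1 i ≤ χ s i ∧ χ s i ≤ χ2 i)
    (hflow : ∀ k, ∀ s ∈ Set.Ioo (σ.t k) (σ.t (k + 1)),
      ∀ j, (χ' s + χ s ᵥ* At s + b) j < 0)
    (hjump : ∀ k : ℕ, 1 ≤ k → ∀ j, (χp k ᵥ* J k - χ (σ.t k) + d) j < 0) :
    (1 - (⨅ i, d i) / (⨆ i, χ2 i)) ∈ Set.Ioo (0 : ℝ) 1 ∧
    (∀ x : ℝ → Fin n → ℝ, IsHomTrajectory σ At J x → (∀ i, 0 ≤ x (σ.t 0) i) →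
      ∀ s : ℝ, σ.t 0 ≤ s →
        norm1 (x s) ≤ ((⨆ i, χ2 i) / (⨅ i, χ1 i)) *
          ((1 - (⨅ i, d i) / (⨆ i, χ2 i)) ^ (σ.kappa (σ.t 0) s) *
            (Real.exp (-(((⨅ i, b i) / (⨆ i, χ2 i)) * (s - σ.t 0))) * norm1 (x (σ.t 0))))) ∧
    (∃ M : ℝ, 0 < M ∧
      ∀ x : ℝ → Fin n → ℝ, IsHomTrajectory σ At J x →
        ∀ s : ℝ, σ.t 0 ≤ s →
          norm1 (x s) ≤ M * ((1 - (⨅ i, d i) / (⨆ i, χ2 i)) ^ (σ.kappa (σ.t 0) s) *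
            (Real.exp (-(((⨅ i, b i) / (⨆ i, χ2 i)) * (s - σ.t 0))) * norm1 (x (σ.t 0))))) := by
  have : Nonempty (Fin n) := ⟨⟨0, hn⟩⟩
  set c₂ := ⨆ i, χ2 i
  have hχ₀ : ∀ s, σ.t 0 ≤ s → 0 ≤ χ s := fun s hs i => (hχ1 i).le.trans (hbound s hs i).1
  have hχc₂ : ∀ s, σ.t 0 ≤ s → ∀ i, χ s i ≤ c₂ := fun s hs i =>
    (hbound s hs i).2.trans (le_ciSup (Finite.bddAbove_range χ2) i)
  have hdc₂ : d ⟨0, hn⟩ < c₂ := by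
    have hχpJ : 0 ≤ (χp 1 ᵥ* J 1) ⟨0, hn⟩ :=
      dotProduct_nonneg_of_nonneg (hpc.le_fplus hχ₀ le_rfl) fun i => hJ 1 le_rfl i _
    have hjump₁ := hjump 1 le_rfl ⟨0, hn⟩
    simp only [Pi.add_apply, Pi.sub_apply] at hjump₁
    linarith [hχc₂ _ (σ.t_zero_le 1) ⟨0, hn⟩]
  have hc₂ : 0 < c₂ := (hd _).trans hdc₂
  have hρ := one_sub_ciInf_div_mem_Ioo hd hdc₂
  have hc₁ : 0 < ⨅ i, χ1 i := Finite.lt_ciInf_of_forall_lt hχ1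
  have key : ∀ x, IsHomTrajectory σ At J x → ∀ s, σ.t 0 ≤ s → norm1 (x s) ≤ c₂ / (⨅ i, χ1 i) *
      ((1 - (⨅ i, d i) / c₂) ^ σ.kappa (σ.t 0) s *
        (exp (-((⨅ i, b i) / c₂ * (s - σ.t 0))) * norm1 (x (σ.t 0)))) := fun x hx s hs => by
    have hV := hx.dotProduct_abs_le hpc (fun s hs => hAM s (σ.t0_nonneg.trans hs)) hJ hχ₀ hρ.1.le
      (fun k s hs => le_neg_smul_of_add_neg (fun i => (hb i).le) hc₂
        (hχc₂ s ((σ.t_zero_le k).trans hs.1.le)) (hflow k s hs))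
      (fun k hk => le_one_sub_smul_of_sub_add_neg (fun i => (hd i).le) hc₂
        (hχc₂ _ (σ.t_zero_le k)) (hjump k hk)) hs
    simpa only [mul_assoc] using norm1_le_div_mul_of_dotProduct_abs_le hc₁
      (mul_nonneg (pow_nonneg hρ.1.le _) (exp_pos _).le)
      (fun i => (ciInf_le (Finite.bddBelow_range χ1) i).trans (hbound s hs i).1)
      (hχc₂ _ le_rfl) (by simpa only [mul_assoc] using hV)
  exact ⟨hρ, fun x hx _ => key x hx, _, div_pos hc₂ hc₁, key⟩

/-- Sufficiency of a linear sum-separable copositive Lyapunov certificate: quantitative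
exponential decay in the 1-norm with hybrid rate `(α, ρ)`. -/
theorem sum_separable_lyapunov_suff {n : ℕ} (hn : 0 < n) (σ : ImpulseSeq)
    (At : ℝ → Matrix (Fin n) (Fin n) ℝ) (J : ℕ → Matrix (Fin n) (Fin n) ℝ)
    (hAcont : ContinuousOn At (Set.Ici 0))
    (hAb : ∃ M, ∀ t ∈ Set.Ici (0 : ℝ), ∀ i j, |At t i j| ≤ M)
    (hAM : ∀ t : ℝ, 0 ≤ t → Metzler (At t))
    (hJ : ∀ k : ℕ, 1 ≤ k → ∀ i j, 0 ≤ J k i j)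
    (b d : Fin n → ℝ) (hb : ∀ i, 0 < b i) (hd : ∀ i, 0 < d i)
    (χ χ' : ℝ → Fin n → ℝ) (χp : ℕ → Fin n → ℝ)
    (hpc : PiecewiseC1 σ χ χ' χp)
    (χ1 χ2 : Fin n → ℝ) (hχ1 : ∀ i, 0 < χ1 i) (hχ12 : ∀ i, χ1 i ≤ χ2 i)
    (hbound : ∀ s : ℝ, σ.t 0 ≤ s → ∀ i, χ1 i ≤ χ s i ∧ χ s i ≤ χ2 i)
    (hflow : ∀ k, ∀ s ∈ Set.Ioo (σ.t k) (σ.t (k + 1)),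
      ∀ j, (χ' s + χ s ᵥ* At s + b) j < 0)
    (hjump : ∀ k : ℕ, 1 ≤ k → ∀ j, (χp k ᵥ* J k - χ (σ.t k) + d) j < 0) :
    (1 - (⨅ i, d i) / (⨆ i, χ2 i)) ∈ Set.Ioo (0 : ℝ) 1 ∧
    (∀ x : ℝ → Fin n → ℝ, IsHomTrajectory σ At J x → (∀ i, 0 ≤ x (σ.t 0) i) →
      ∀ s : ℝ, σ.t 0 ≤ s →
        norm1 (x s) ≤ ((⨆ i, χ2 i) / (⨅ i, χ1 i)) *
          ((1 - (⨅ i, d i) / (⨆ i, χ2 i)) ^ (σ.kappa (σ.t 0) s) *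
            (Real.exp (-(((⨅ i, b i) / (⨆ i, χ2 i)) * (s - σ.t 0))) * norm1 (x (σ.t 0))))) ∧
    (∃ M : ℝ, 0 < M ∧
      ∀ x : ℝ → Fin n → ℝ, IsHomTrajectory σ At J x →
        ∀ s : ℝ, σ.t 0 ≤ s →
          norm1 (x s) ≤ M * ((1 - (⨅ i, d i) / (⨆ i, χ2 i)) ^ (σ.kappa (σ.t 0) s) *
            (Real.exp (-(((⨅ i, b i) / (⨆ i, χ2 i)) * (s - σ.t 0))) * norm1 (x (σ.t 0))))) :=
  sum_separable_lyapunov_suff_general hn σ At J hAM hJ b d hb hd χ χ' χp hpc χ1 χ2 hχ1 hbound hflow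
    hjump
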